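/- For any finite rooted plane tree T, (1/2) · max_{v ∈ T} S(v) ≤ wid(T) ≤ max_{v ∈ T} S(v), where wid(T) is the width of T (the maximum number of nodes at any fixed depth) and S(v) is the breadth-first queue length just before v is explored. -/

import Mathlib

inductive PlaneTree : Type
  | node : List PlaneTree → PlaneTree

namespace PlaneTree

def children : PlaneTree → List PlaneTree
  | node ts => ts

mutual
  def height : PlaneTree → ℕ
    | node ts => heightList ts
  def heightList : List PlaneTree → ℕ
    | [] => 0
    | t :: ts => max (height t + 1) (heightList ts)
end

mutual
  def size : PlaneTree → ℕ
    | node ts => 1 + sizeList ts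
  def sizeList : List PlaneTree → ℕ
    | [] => 0
    | t :: ts => size t + sizeList ts
end

def level : ℕ → PlaneTree → List PlaneTree
  | 0, t => [t]
  | n + 1, t => (children t).flatMap (level n)

def bfsList (t : PlaneTree) : List PlaneTree :=
  (List.range (height t + 1)).flatMap (fun n => level n t)

def S (t : PlaneTree) (i : ℕ) : ℤ :=
  1 + ∑ j ∈ Finset.range i, ((((bfsList t).getD j (node [])).children.length : ℤ) - 1)

def width (t : PlaneTree) : ℕ :=
  (Finset.range (height t + 1)).sup (fun n => (level n t).length)

end PlaneTree

namespace PlaneTree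

/-- The maximum breadth-first queue length over all nodes of the tree. -/
def maxS (t : PlaneTree) : ℤ :=
  ((List.range (bfsList t).length).map (S t)).foldr max 1

end PlaneTree


/-
Label the breadth-first list level by level. Since every non-root node is the child of exactly
one node on the level above, the queue just before the `p`-th node of level `k` is explored
consists of the `|T_k| - p` unexplored nodes of level `k` and the children of the first `p` nodes
of level `k`, all of which lie in `T_{k+1}`. Hence every `S(v)` is at most `|T_k| + |T_{k+1}|`,
and `S(v) = |T_k|` at the first node of each level.
-/

theorem List.foldr_max_le {α : Type*} [LinearOrder α] {l : List α} {a b : α} (hb : b ≤ a)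
    (h : ∀ x ∈ l, x ≤ a) : l.foldr max b ≤ a := by
  induction l with
  | nil => exact hb
  | cons y l ih =>
    exact max_le (h y List.mem_cons_self) (ih fun x hx => h x (List.mem_cons_of_mem _ hx))

theorem Finset.sum_range_getD_eq_sum_take {α M : Type*} [AddCommMonoid M] (f : α → M)
    (l : List α) (d : α) {i : ℕ} (hi : i ≤ l.length) :
    ∑ j ∈ Finset.range i, f (l.getD j d) = ((l.take i).map f).sum := by
  induction i with
  | zero => simp
  | succ i ih =>
    rw [Finset.sum_range_succ, ih (by omega), List.take_add_one, List.getD_eq_getElem?_getD,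
      List.getElem?_eq_getElem (by omega)]
    simp only [Option.getD_some, Option.toList_some, List.map_append, List.sum_append,
      List.map_singleton, List.sum_singleton]

namespace PlaneTree

theorem level_succ_eq_flatMap_children (k : ℕ) (t : PlaneTree) :
    level (k + 1) t = (level k t).flatMap children := by
  induction k generalizing t with
  | zero => simp [level]
  | succ k ih =>
    change t.children.flatMap (level (k + 1)) = (t.children.flatMap (level k)).flatMap children
    rw [List.flatMap_assoc]
    exact List.flatMap_congr fun c _ => ih c

theorem height_add_one_le_of_mem_children {t c : PlaneTree} (hc : c ∈ t.children) :
    height c + 1 ≤ height t := by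
  obtain ⟨ts⟩ := t
  change heightList ts ≥ _
  induction ts with
  | nil => cases hc
  | cons a ts ih =>
    rcases List.mem_cons.1 hc with rfl | hc
    · exact le_max_left _ _
    · exact (ih hc).trans (le_max_right _ _)

theorem exists_mem_children_height_eq {t : PlaneTree} (ht : height t ≠ 0) :
    ∃ c ∈ t.children, height t = height c + 1 := by
  obtain ⟨ts⟩ := t
  change heightList ts ≠ 0 at ht
  change ∃ c ∈ ts, heightList ts = _
  induction ts with
  | nil => exact absurd rfl ht
  | cons a ts ih =>
    simp only [heightList] at ht ⊢
    rcases le_or_gt (heightList ts) (height a + 1) with h | h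
    · exact ⟨a, List.mem_cons_self, by omega⟩
    · obtain ⟨c, hc, hc_eq⟩ := ih (by omega)
      exact ⟨c, List.mem_cons_of_mem _ hc, by omega⟩

theorem level_eq_nil_of_height_lt : ∀ {k : ℕ} {t : PlaneTree}, height t < k → level k t = []
  | 0, _, h => absurd h (Nat.not_lt_zero _)
  | k + 1, t, h => List.flatMap_eq_nil_iff.2 fun _ hc =>
      level_eq_nil_of_height_lt (by have := height_add_one_le_of_mem_children hc; omega)

theorem level_ne_nil_of_le_height :
    ∀ {k : ℕ} {t : PlaneTree}, k ≤ height t → level k t ≠ []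
  | 0, _, _ => List.cons_ne_nil _ _
  | k + 1, t, h => by
    obtain ⟨c, hc, hc_eq⟩ := exists_mem_children_height_eq (t := t) (by omega)
    obtain ⟨v, hv⟩ := List.exists_mem_of_ne_nil _ (level_ne_nil_of_le_height (k := k) (t := c)
      (by omega))
    exact List.ne_nil_of_mem (List.mem_flatMap.2 ⟨c, hc, hv⟩)

theorem length_level_le_width (t : PlaneTree) (k : ℕ) : (level k t).length ≤ width t := by
  rcases le_or_gt k (height t) with hk | hk
  · exact Finset.le_sup (f := fun n => (level n t).length) (Finset.mem_range.2 (by omega))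
  · simp [level_eq_nil_of_height_lt hk]

theorem exists_length_level_eq_width (t : PlaneTree) :
    ∃ k ≤ height t, (level k t).length = width t := by
  obtain ⟨k, hk, hsup⟩ := Finset.exists_mem_eq_sup (Finset.range (height t + 1))
    ⟨0, Finset.mem_range.2 (Nat.succ_pos _)⟩ fun n => (level n t).length
  exact ⟨k, Nat.lt_succ_iff.1 (Finset.mem_range.1 hk), hsup.symm⟩

theorem one_le_width (t : PlaneTree) : 1 ≤ width t :=
  length_level_le_width t 0

def levelsBelow (t : PlaneTree) (k : ℕ) : List PlaneTree :=
  (List.range k).flatMap (level · t)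

/-- The breadth-first index of the first node of depth `k`. -/
def levelStart (t : PlaneTree) (k : ℕ) : ℕ :=
  (levelsBelow t k).length

theorem bfsList_eq_levelsBelow (t : PlaneTree) : bfsList t = levelsBelow t (height t + 1) := rfl

theorem levelsBelow_succ (t : PlaneTree) (k : ℕ) :
    levelsBelow t (k + 1) = levelsBelow t k ++ level k t := by
  simp [levelsBelow, List.range_succ]

theorem levelStart_succ (t : PlaneTree) (k : ℕ) :
    levelStart t (k + 1) = levelStart t k + (level k t).length := by
  simp [levelStart, levelsBelow_succ]

theorem levelsBelow_prefix_of_le (t : PlaneTree) {k m : ℕ} (h : k ≤ m) :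
    levelsBelow t k <+: levelsBelow t m := by
  induction m, h using Nat.le_induction with
  | base => exact List.prefix_refl _
  | succ m _ ih => exact ih.trans (levelsBelow_succ t m ▸ List.prefix_append _ _)

theorem levelStart_succ_le_length_bfsList (t : PlaneTree) {k : ℕ} (hk : k ≤ height t) :
    levelStart t (k + 1) ≤ (bfsList t).length :=
  (levelsBelow_prefix_of_le t (Nat.succ_le_succ hk)).length_le

theorem levelStart_lt_length_bfsList (t : PlaneTree) {k : ℕ} (hk : k ≤ height t) :
    levelStart t k < (bfsList t).length := by
  have := levelStart_succ_le_length_bfsList t hk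
  have := List.length_pos_iff.2 (level_ne_nil_of_le_height hk)
  rw [levelStart_succ] at *
  omega

theorem exists_levelStart_le_lt (t : PlaneTree) {m i : ℕ} (hi : i < levelStart t m) :
    ∃ k < m, levelStart t k ≤ i ∧ i < levelStart t (k + 1) := by
  induction m with
  | zero => simp [levelStart, levelsBelow] at hi
  | succ m ih =>
    rcases lt_or_ge i (levelStart t m) with h | h
    · obtain ⟨k, hk, hle, hlt⟩ := ih h
      exact ⟨k, by omega, hle, hlt⟩
    · exact ⟨m, by omega, h, hi⟩

theorem take_bfsList_levelStart_add (t : PlaneTree) {k p : ℕ} (hk : k ≤ height t)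
    (hp : p ≤ (level k t).length) :
    (bfsList t).take (levelStart t k + p) = levelsBelow t k ++ (level k t).take p := by
  have hpre := List.prefix_iff_eq_take.1 (levelsBelow_prefix_of_le t (Nat.succ_le_succ hk))
  rw [← List.take_length_add_append, ← levelsBelow_succ, hpre, List.take_take, levelStart,
    ← bfsList_eq_levelsBelow, levelsBelow_succ, List.length_append]
  congr 1
  omega

/-- Every node of depth in `1, …, k` is a child of exactly one node of depth less than `k`. -/
theorem length_flatMap_children_levelsBelow (t : PlaneTree) (k : ℕ) :
    ((levelsBelow t k).flatMap children).length + 1 = levelStart t (k + 1) := by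
  induction k with
  | zero => rfl
  | succ k ih =>
    rw [levelsBelow_succ, List.flatMap_append, List.length_append,
      ← level_succ_eq_flatMap_children, levelStart_succ (k := k + 1)]
    omega

theorem sum_map_length_children_sub_one (l : List PlaneTree) :
    (l.map fun v => (v.children.length : ℤ) - 1).sum =
      ((l.flatMap children).length : ℤ) - l.length := by
  induction l with
  | nil => simp
  | cons v l ih =>
    simp only [List.map_cons, List.sum_cons, ih, List.flatMap_cons, List.length_append,
      List.length_cons]
    push_cast
    ring

theorem S_levelStart_add (t : PlaneTree) {k p : ℕ} (hk : k ≤ height t)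
    (hp : p ≤ (level k t).length) :
    S t (levelStart t k + p) =
      ((level k t).length : ℤ) - p + (((level k t).take p).flatMap children).length := by
  have hlen : levelStart t k + p ≤ (bfsList t).length := by
    have := levelStart_succ_le_length_bfsList t hk
    rw [levelStart_succ] at this
    omega
  have hbelow := length_flatMap_children_levelsBelow t k
  rw [levelStart_succ, levelStart] at hbelow
  rw [S, Finset.sum_range_getD_eq_sum_take (fun v => (v.children.length : ℤ) - 1) _ _ hlen,
    take_bfsList_levelStart_add t hk hp, List.map_append, List.sum_append,
    sum_map_length_children_sub_one, sum_map_length_children_sub_one]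
  simp only [List.length_take, min_eq_left hp]
  omega

theorem S_levelStart (t : PlaneTree) {k : ℕ} (hk : k ≤ height t) :
    S t (levelStart t k) = (level k t).length := by
  simpa using S_levelStart_add t hk (Nat.zero_le _)

theorem S_le_two_mul_width (t : PlaneTree) {i : ℕ} (hi : i < (bfsList t).length) :
    S t i ≤ 2 * (width t : ℤ) := by
  obtain ⟨k, hk, hle, hlt⟩ := exists_levelStart_le_lt t hi
  rw [levelStart_succ] at hlt
  obtain ⟨p, rfl⟩ := Nat.exists_eq_add_of_le hle
  rw [S_levelStart_add t (by omega) (by omega)]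
  have hchildren : (((level k t).take p).flatMap children).length ≤ (level (k + 1) t).length := by
    rw [level_succ_eq_flatMap_children]
    exact ((List.take_prefix p _).flatMap children).length_le
  have := length_level_le_width t k
  have := length_level_le_width t (k + 1)
  omega

end PlaneTree

open PlaneTree in
theorem stmt3 (t : PlaneTree) :
    maxS t ≤ 2 * (width t : ℤ) ∧ (width t : ℤ) ≤ maxS t := by
  constructor
  · refine List.foldr_max_le (by have := one_le_width t; omega) fun x hx => ?_
    obtain ⟨i, hi, rfl⟩ := List.mem_map.1 hx
    exact S_le_two_mul_width t (List.mem_range.1 hi)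
  · obtain ⟨k, hk, hwidth⟩ := exists_length_level_eq_width t
    have hmem : S t (levelStart t k) ∈ (List.range (bfsList t).length).map (S t) :=
      List.mem_map_of_mem (List.mem_range.2 (levelStart_lt_length_bfsList t hk))
    exact List.le_max_of_le' 1 hmem (by rw [S_levelStart t hk, hwidth])
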